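/- With A, A* as above and for f ∈ L²_0(ρ_0), g ∈ L²_0(ρ_1), the following intertwining identities hold: A(I − A*A)^{-1} = (I − AA*)^{-1} A on L²_0(ρ_0) and A*(I − AA*)^{-1} = (I − A*A)^{-1} A* on L²_0(ρ_1). Moreover, for (X,Y) ∼ μ_ε, E[(I − A*A)^{-1}(f − A*g)(X) + (I − AA*)^{-1}(g − Af)(Y) | X] = f(X) almost surely, and the symmetric identity holds conditioning on Y. -/

import Mathlib

/-!
The spectral gap makes `I - AA*` injective on `L²₀(ρ₁)`: a fixed point `w = AA*w` has
`‖w‖ ≤ s²‖w‖`. Likewise for `I - A*A` on `L²₀(ρ₀)`. The intertwining identities then say that two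
functions solve the same equation: `v` and `Au` both solve `(I - AA*) x = Af`. For the conditional
identities, `u + A*v` and `f` both solve `(I - A*A) x = f - A*Af`, so `u + A*v = f`; and since the
law of `Y` given `X = x` has density `ξ(x, ·)` with respect to `ρ₁`, `E[v(Y) | X] = (A*v)(X)`,
whence `E[u(X) + v(Y) | X] = f(X)`. Conditioning on `Y` is the same argument with the two
marginals exchanged.
-/

open MeasureTheory
open scoped ENNReal

noncomputable section

variable {α β : Type*} [MeasurableSpace β] {ν : Measure β} {K : α → β → ℝ}

def markovOp (ν : Measure β) (K : α → β → ℝ) (v : β → ℝ) (x : α) : ℝ :=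
  ∫ y, v y * K x y ∂ν

theorem markovOp_congr_ae {a b : β → ℝ} (h : a =ᵐ[ν] b) : markovOp ν K a = markovOp ν K b :=
  funext fun x => integral_congr_ae (h.mono fun y hy => by simp only [hy])

variable [MeasurableSpace α] {μ : Measure α}

def densityCoupling (μ : Measure α) (ν : Measure β) (K : α → β → ℝ) : Measure (α × β) :=
  (μ.prod ν).withDensity fun z => ENNReal.ofReal (K z.1 z.2)

structure IsConditionalDensity (μ : Measure α) (ν : Measure β) (K : α → β → ℝ) : Prop where
  measurable : Measurable (Function.uncurry K)
  nonneg : ∀ x y, 0 ≤ K x y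
  lintegral_eq_one : ∀ᵐ y ∂ν, ∫⁻ x, ENNReal.ofReal (K x y) ∂μ = 1

theorem aestronglyMeasurable_markovOp [SFinite ν] (hK : Measurable (Function.uncurry K))
    {v : β → ℝ} (hv : AEStronglyMeasurable v ν) :
    AEStronglyMeasurable (markovOp ν K v) μ :=
  (hv.comp_snd.mul hK.aestronglyMeasurable).integral_prod_right'
    (f := fun z : α × β => v z.2 * K z.1 z.2)

namespace IsConditionalDensity

theorem integral_eq_one (hK : IsConditionalDensity μ ν K) : ∀ᵐ y ∂ν, ∫ x, K x y ∂μ = 1 := by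
  filter_upwards [hK.lintegral_eq_one] with y hy
  rw [integral_eq_lintegral_of_nonneg_ae (.of_forall fun x => hK.nonneg x y)
    hK.measurable.of_uncurry_right.aestronglyMeasurable, hy, ENNReal.toReal_one]

variable [SFinite μ] [SFinite ν]

theorem integrable_prod (hK : IsConditionalDensity μ ν K) {v : β → ℝ}
    (hv : Integrable v ν) : Integrable (fun z : α × β => v z.2 * K z.1 z.2) (μ.prod ν) := by
  refine ⟨hv.1.comp_snd.mul hK.measurable.aestronglyMeasurable, ?_⟩
  have hKe : ∀ x y, ‖K x y‖ₑ = ENNReal.ofReal (K x y) := fun x y =>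
    Real.enorm_eq_ofReal (hK.nonneg x y)
  calc ∫⁻ z, ‖v z.2 * K z.1 z.2‖ₑ ∂μ.prod ν
      = ∫⁻ y, ∫⁻ x, ‖v y‖ₑ * ENNReal.ofReal (K x y) ∂μ ∂ν := by
        simp only [enorm_mul, hKe]
        exact lintegral_prod_symm _
          (hv.1.enorm.comp_snd.mul hK.measurable.ennreal_ofReal.aemeasurable)
    _ = ∫⁻ y, ‖v y‖ₑ ∂ν := by
        refine lintegral_congr_ae ?_
        filter_upwards [hK.lintegral_eq_one] with y hy
        rw [lintegral_const_mul _ hK.measurable.of_uncurry_right.ennreal_ofReal, hy,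
          mul_one]
    _ < ⊤ := hv.2

theorem ae_integrable_mul (hK : IsConditionalDensity μ ν K) {v : β → ℝ}
    (hv : Integrable v ν) : ∀ᵐ x ∂μ, Integrable (fun y => v y * K x y) ν :=
  (hK.integrable_prod hv).prod_right_ae

theorem integral_markovOp (hK : IsConditionalDensity μ ν K) {v : β → ℝ}
    (hv : Integrable v ν) : ∫ x, markovOp ν K v x ∂μ = ∫ y, v y ∂ν := by
  simp only [markovOp]
  rw [← integral_prod _ (hK.integrable_prod hv), integral_prod_symm _ (hK.integrable_prod hv)]
  refine integral_congr_ae ?_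
  filter_upwards [hK.integral_eq_one] with y hy
  rw [integral_const_mul, hy, mul_one]

theorem markovOp_add (hK : IsConditionalDensity μ ν K) {a b : β → ℝ}
    (ha : Integrable a ν) (hb : Integrable b ν) :
    markovOp ν K (a + b) =ᵐ[μ] markovOp ν K a + markovOp ν K b := by
  filter_upwards [hK.ae_integrable_mul ha, hK.ae_integrable_mul hb] with x hax hbx
  simp only [markovOp, Pi.add_apply, add_mul]
  exact integral_add hax hbx

theorem markovOp_sub (hK : IsConditionalDensity μ ν K) {a b : β → ℝ}
    (ha : Integrable a ν) (hb : Integrable b ν) :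
    markovOp ν K (a - b) =ᵐ[μ] markovOp ν K a - markovOp ν K b := by
  filter_upwards [hK.ae_integrable_mul ha, hK.ae_integrable_mul hb] with x hax hbx
  simp only [markovOp, Pi.sub_apply, sub_mul]
  exact integral_sub hax hbx

end IsConditionalDensity

theorem densityCoupling_map_swap [SFinite μ] [SFinite ν] :
    (densityCoupling μ ν K).map Prod.swap = densityCoupling ν μ (flip K) := by
  ext s hs
  rw [Measure.map_apply measurable_swap hs, densityCoupling, densityCoupling,
    withDensity_apply _ (measurable_swap hs), withDensity_apply _ hs]
  exact (Measure.measurePreserving_swap (μ := μ) (ν := ν)).setLIntegral_comp_preimage_emb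
    MeasurableEquiv.prodComm.measurableEmbedding (fun z => ENNReal.ofReal (flip K z.1 z.2)) s

theorem IsConditionalDensity.of_map_snd [SFinite μ] [SigmaFinite ν]
    (hK : Measurable (Function.uncurry K)) (hK0 : ∀ x y, 0 ≤ K x y)
    (h : (densityCoupling μ ν K).map Prod.snd = ν) : IsConditionalDensity μ ν K := by
  refine ⟨hK, hK0, ae_eq_of_forall_setLIntegral_eq_of_sigmaFinite
    (hK.ennreal_ofReal.lintegral_prod_left' : Measurable fun y => ∫⁻ x, _ ∂μ) measurable_const
    fun s hs _ => ?_⟩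
  calc ∫⁻ y in s, ∫⁻ x, ENNReal.ofReal (K x y) ∂μ ∂ν
      = ∫⁻ z in Set.univ ×ˢ s, ENNReal.ofReal (K z.1 z.2) ∂μ.prod ν := by
        rw [← Measure.prod_restrict, Measure.restrict_univ,
          lintegral_prod_symm (fun z : α × β => ENNReal.ofReal (K z.1 z.2))
            hK.ennreal_ofReal.aemeasurable]
    _ = (densityCoupling μ ν K).map Prod.snd s := by
        rw [Measure.map_apply measurable_snd hs, densityCoupling,
          withDensity_apply _ (measurable_snd hs), Set.univ_prod]
    _ = ∫⁻ _ in s, 1 ∂ν := by rw [h, setLIntegral_const, one_mul]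

theorem IsConditionalDensity.of_map_fst [SigmaFinite μ] [SFinite ν]
    (hK : Measurable (Function.uncurry K)) (hK0 : ∀ x y, 0 ≤ K x y)
    (h : (densityCoupling μ ν K).map Prod.fst = μ) : IsConditionalDensity ν μ (flip K) := by
  refine .of_map_snd (hK.comp measurable_swap) (fun y x => hK0 x y) ?_
  rw [← densityCoupling_map_swap, Measure.map_map measurable_snd measurable_swap]
  exact h

namespace IsConditionalDensity

variable [SFinite μ] [SFinite ν]

theorem setIntegral_densityCoupling_preimage_fst (hK : IsConditionalDensity μ ν K) {v : β → ℝ}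
    (hv : Integrable v ν) {s : Set α} (hs : MeasurableSet s) :
    ∫ z in Prod.fst ⁻¹' s, v z.2 ∂densityCoupling μ ν K = ∫ x in s, markovOp ν K v x ∂μ := by
  rw [densityCoupling, setIntegral_withDensity_eq_setIntegral_toReal_smul
    (f := fun z : α × β => ENNReal.ofReal (K z.1 z.2)) hK.measurable.ennreal_ofReal
    (.of_forall fun _ => ENNReal.ofReal_lt_top) _ (measurable_fst hs),
    ← Set.prod_univ]
  simp only [ENNReal.toReal_ofReal (hK.nonneg _ _), smul_eq_mul, mul_comm (K _ _)]
  rw [setIntegral_prod _ (hK.integrable_prod hv).integrableOn, Measure.restrict_univ]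
  rfl

theorem setIntegral_densityCoupling_preimage_snd (hK : IsConditionalDensity ν μ (flip K))
    {u : α → ℝ} (hu : Integrable u μ) {t : Set β} (ht : MeasurableSet t) :
    ∫ z in Prod.snd ⁻¹' t, u z.1 ∂densityCoupling μ ν K = ∫ y in t, markovOp μ (flip K) u y ∂ν := by
  calc ∫ z in Prod.snd ⁻¹' t, u z.1 ∂densityCoupling μ ν K
      = ∫ z in Prod.fst ⁻¹' t, u z.2 ∂(densityCoupling μ ν K).map Prod.swap :=
        (MeasurableEquiv.prodComm.measurableEmbedding.setIntegral_map (μ := densityCoupling μ ν K)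
          (fun z : β × α => u z.2) (Prod.fst ⁻¹' t)).symm
    _ = ∫ y in t, markovOp μ (flip K) u y ∂ν := by
        rw [densityCoupling_map_swap]
        exact hK.setIntegral_densityCoupling_preimage_fst hu ht

end IsConditionalDensity

def MemL2₀ (f : α → ℝ) (μ : Measure α) : Prop :=
  MemLp f 2 μ ∧ ∫ x, f x ∂μ = 0

theorem MemL2₀.integrable [IsFiniteMeasure μ] {f : α → ℝ} (hf : MemL2₀ f μ) : Integrable f μ :=
  hf.1.integrable one_le_two

theorem MemL2₀.sub [IsFiniteMeasure μ] {f g : α → ℝ} (hf : MemL2₀ f μ) (hg : MemL2₀ g μ) :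
    MemL2₀ (f - g) μ :=
  ⟨hf.1.sub hg.1, by rw [integral_sub' hf.integrable hg.integrable, hf.2, hg.2, sub_zero]⟩

theorem MemL2₀.add [IsFiniteMeasure μ] {f g : α → ℝ} (hf : MemL2₀ f μ) (hg : MemL2₀ g μ) :
    MemL2₀ (f + g) μ :=
  ⟨hf.1.add hg.1, by rw [integral_add' hf.integrable hg.integrable, hf.2, hg.2, add_zero]⟩

/-- The operators `A` and `A*` of the paper are `markovOp μ (flip K)` and `markovOp ν K`. -/
structure HasSpectralGap (μ : Measure α) (ν : Measure β) (K : α → β → ℝ) (s : ℝ) : Prop where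
  isConditionalDensity : IsConditionalDensity μ ν K
  isConditionalDensity_flip : IsConditionalDensity ν μ (flip K)
  lt_one : s < 1
  eLpNorm_le : ∀ f, MemLp f 2 μ → ∫ x, f x ∂μ = 0 →
    eLpNorm (markovOp μ (flip K) f) 2 ν ≤ ENNReal.ofReal s * eLpNorm f 2 μ
  eLpNorm_le_flip : ∀ g, MemLp g 2 ν → ∫ y, g y ∂ν = 0 →
    eLpNorm (markovOp ν K g) 2 μ ≤ ENNReal.ofReal s * eLpNorm g 2 ν

namespace HasSpectralGap

variable {s : ℝ}

theorem symm (h : HasSpectralGap μ ν K s) : HasSpectralGap ν μ (flip K) s :=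
  ⟨h.isConditionalDensity_flip, h.isConditionalDensity, h.lt_one, h.eLpNorm_le_flip, h.eLpNorm_le⟩

variable [IsFiniteMeasure μ] [IsFiniteMeasure ν]

theorem memL2₀_markovOp (h : HasSpectralGap μ ν K s) {f : α → ℝ} (hf : MemL2₀ f μ) :
    MemL2₀ (markovOp μ (flip K) f) ν :=
  ⟨⟨aestronglyMeasurable_markovOp h.isConditionalDensity_flip.measurable hf.1.1,
      (h.eLpNorm_le f hf.1 hf.2).trans_lt (ENNReal.mul_lt_top ENNReal.ofReal_lt_top hf.1.2)⟩,
    (h.isConditionalDensity_flip.integral_markovOp hf.integrable).trans hf.2⟩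

theorem memL2₀_markovOp_symm (h : HasSpectralGap μ ν K s) {g : β → ℝ} (hg : MemL2₀ g ν) :
    MemL2₀ (markovOp ν K g) μ :=
  h.symm.memL2₀_markovOp hg

theorem eLpNorm_markovOp_markovOp_le (h : HasSpectralGap μ ν K s) {w : β → ℝ} (hw : MemL2₀ w ν) :
    eLpNorm (markovOp μ (flip K) (markovOp ν K w)) 2 ν
      ≤ ENNReal.ofReal s * ENNReal.ofReal s * eLpNorm w 2 ν :=
  calc eLpNorm (markovOp μ (flip K) (markovOp ν K w)) 2 ν
      ≤ ENNReal.ofReal s * eLpNorm (markovOp ν K w) 2 μ :=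
        h.eLpNorm_le _ (h.memL2₀_markovOp_symm hw).1 (h.memL2₀_markovOp_symm hw).2
    _ ≤ ENNReal.ofReal s * (ENNReal.ofReal s * eLpNorm w 2 ν) :=
        by gcongr; exact h.eLpNorm_le_flip w hw.1 hw.2
    _ = _ := (mul_assoc _ _ _).symm

theorem ae_eq_zero_of_ae_eq_markovOp_markovOp (h : HasSpectralGap μ ν K s) {w : β → ℝ}
    (hw : MemL2₀ w ν) (hfix : w =ᵐ[ν] markovOp μ (flip K) (markovOp ν K w)) : w =ᵐ[ν] 0 := by
  have hs : ENNReal.ofReal s * ENNReal.ofReal s < 1 :=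
    mul_lt_one_of_nonneg_of_lt_one_left zero_le (ENNReal.ofReal_lt_one.2 h.lt_one)
      (ENNReal.ofReal_lt_one.2 h.lt_one).le
  have hle : eLpNorm w 2 ν ≤ ENNReal.ofReal s * ENNReal.ofReal s * eLpNorm w 2 ν :=
    (eLpNorm_congr_ae hfix).trans_le (h.eLpNorm_markovOp_markovOp_le hw)
  refine (eLpNorm_eq_zero_iff hw.1.1 two_ne_zero).1 (by_contra fun hne => hle.not_gt ?_)
  simpa using ENNReal.mul_lt_mul_left hne hw.1.2.ne hs

theorem ae_eq_of_sub_markovOp_markovOp (h : HasSpectralGap μ ν K s) {a b : β → ℝ}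
    (ha : MemL2₀ a ν) (hb : MemL2₀ b ν)
    (hab : a - markovOp μ (flip K) (markovOp ν K a) =ᵐ[ν]
      b - markovOp μ (flip K) (markovOp ν K b)) : a =ᵐ[ν] b := by
  have hfix : a - b =ᵐ[ν] markovOp μ (flip K) (markovOp ν K (a - b)) := by
    rw [markovOp_congr_ae (h.isConditionalDensity.markovOp_sub ha.integrable hb.integrable)]
    filter_upwards [hab, h.isConditionalDensity_flip.markovOp_sub
      (h.memL2₀_markovOp_symm ha).integrable (h.memL2₀_markovOp_symm hb).integrable] with y hy hAy
    simp only [Pi.sub_apply] at hy hAy ⊢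
    linarith
  filter_upwards [h.ae_eq_zero_of_ae_eq_markovOp_markovOp (ha.sub hb) hfix] with y hy
  exact sub_eq_zero.1 hy

theorem ae_eq_markovOp_of_sub_markovOp_markovOp (h : HasSpectralGap μ ν K s) {f u : α → ℝ}
    {v : β → ℝ} (hu : MemL2₀ u μ) (hv : MemL2₀ v ν)
    (hu' : u - markovOp ν K (markovOp μ (flip K) u) =ᵐ[μ] f)
    (hv' : v - markovOp μ (flip K) (markovOp ν K v) =ᵐ[ν] markovOp μ (flip K) f) :
    v =ᵐ[ν] markovOp μ (flip K) u := by
  have hAu := h.memL2₀_markovOp hu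
  refine h.ae_eq_of_sub_markovOp_markovOp hv hAu ?_
  calc v - markovOp μ (flip K) (markovOp ν K v)
      =ᵐ[ν] markovOp μ (flip K) f := hv'
    _ = markovOp μ (flip K) (u - markovOp ν K (markovOp μ (flip K) u)) :=
        markovOp_congr_ae hu'.symm
    _ =ᵐ[ν] markovOp μ (flip K) u -
          markovOp μ (flip K) (markovOp ν K (markovOp μ (flip K) u)) :=
        h.isConditionalDensity_flip.markovOp_sub hu.integrable
          (h.memL2₀_markovOp_symm hAu).integrable

theorem add_markovOp_ae_eq_of_sub_markovOp_markovOp (h : HasSpectralGap μ ν K s)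
    {f u : α → ℝ} {g v : β → ℝ} (hf : MemL2₀ f μ) (hg : Integrable g ν) (hu : MemL2₀ u μ)
    (hv : MemL2₀ v ν)
    (hu' : u - markovOp ν K (markovOp μ (flip K) u) =ᵐ[μ] f - markovOp ν K g)
    (hv' : v - markovOp μ (flip K) (markovOp ν K v) =ᵐ[ν] g - markovOp μ (flip K) f) :
    u + markovOp ν K v =ᵐ[μ] f := by
  have hA := h.isConditionalDensity_flip
  have hAstar := h.isConditionalDensity
  have hAstar_v := h.memL2₀_markovOp_symm hv
  have hAf := h.memL2₀_markovOp hf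
  refine h.symm.ae_eq_of_sub_markovOp_markovOp (hu.add hAstar_v) hf ?_
  rw [flip_flip]
  have hsum : markovOp ν K (markovOp μ (flip K) (u + markovOp ν K v)) =ᵐ[μ]
      markovOp ν K (markovOp μ (flip K) u) +
        markovOp ν K (markovOp μ (flip K) (markovOp ν K v)) := by
    rw [markovOp_congr_ae (hA.markovOp_add hu.integrable hAstar_v.integrable)]
    exact hAstar.markovOp_add (h.memL2₀_markovOp hu).integrable
      (h.memL2₀_markovOp hAstar_v).integrable
  have hv'' : markovOp ν K v - markovOp ν K (markovOp μ (flip K) (markovOp ν K v)) =ᵐ[μ]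
      markovOp ν K g - markovOp ν K (markovOp μ (flip K) f) :=
    calc markovOp ν K v - markovOp ν K (markovOp μ (flip K) (markovOp ν K v))
        =ᵐ[μ] markovOp ν K (v - markovOp μ (flip K) (markovOp ν K v)) :=
          (hAstar.markovOp_sub hv.integrable (h.memL2₀_markovOp hAstar_v).integrable).symm
      _ = markovOp ν K (g - markovOp μ (flip K) f) := markovOp_congr_ae hv'
      _ =ᵐ[μ] markovOp ν K g - markovOp ν K (markovOp μ (flip K) f) :=
          hAstar.markovOp_sub hg hAf.integrable
  filter_upwards [hu', hv'', hsum] with x hux hvx hsx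
  simp only [Pi.add_apply, Pi.sub_apply] at hux hvx hsx ⊢
  linarith

end HasSpectralGap

theorem condExp_comap_add_ae_eq {Ω : Type*} [MeasurableSpace Ω] {π : Measure Ω}
    [IsFiniteMeasure π] {X : Ω → α} {Y : Ω → β} (hX : Measurable X) (hY : Measurable Y)
    (hXμ : π.map X = μ) (hYν : π.map Y = ν) {u f w : α → ℝ} {v : β → ℝ} (hu : Integrable u μ)
    (hf : Integrable f μ) (hw : Integrable w μ) (hv : Integrable v ν)
    (hvw : ∀ t, MeasurableSet t → ∫ ω in X ⁻¹' t, v (Y ω) ∂π = ∫ x in t, w x ∂μ)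
    (huw : u + w =ᵐ[μ] f) :
    π[fun ω => u (X ω) + v (Y ω) | MeasurableSpace.comap X inferInstance]
      =ᵐ[π] fun ω => f (X ω) := by
  subst hXμ hYν
  refine (ae_eq_condExp_of_forall_setIntegral_eq hX.comap_le
    ((hu.comp_measurable hX).add (hv.comp_measurable hY))
    (fun _ _ _ => (hf.comp_measurable hX).integrableOn) ?_
    (hf.1.comp_ae_measurable' hX.aemeasurable)).symm
  rintro _ ⟨t, ht, rfl⟩ -
  calc ∫ ω in X ⁻¹' t, f (X ω) ∂π
      = ∫ x in t, f x ∂π.map X := (setIntegral_map ht hf.1 hX.aemeasurable).symm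
    _ = ∫ x in t, (u x + w x) ∂π.map X :=
        setIntegral_congr_ae ht (huw.mono fun x hx _ => hx.symm)
    _ = ∫ ω in X ⁻¹' t, u (X ω) ∂π + ∫ ω in X ⁻¹' t, v (Y ω) ∂π := by
        rw [integral_add hu.integrableOn hw.integrableOn, hvw t ht,
          setIntegral_map ht hu.1 hX.aemeasurable]
    _ = ∫ ω in X ⁻¹' t, (u (X ω) + v (Y ω)) ∂π :=
        (integral_add (hu.comp_measurable hX).integrableOn
          (hv.comp_measurable hY).integrableOn).symm

end

theorem intertwining_and_conditional_identities_general (d : ℕ)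
    (ρ0 ρ1 : Measure (EuclideanSpace ℝ (Fin d)))
    [IsProbabilityMeasure ρ0] [IsProbabilityMeasure ρ1]
    (ξ : EuclideanSpace ℝ (Fin d) × EuclideanSpace ℝ (Fin d) → ℝ)
    (hξmeas : Measurable ξ) (hξpos : ∀ z, 0 ≤ ξ z)
    (με : Measure (EuclideanSpace ℝ (Fin d) × EuclideanSpace ℝ (Fin d)))
    [IsProbabilityMeasure με]
    (hμε : με = (ρ0.prod ρ1).withDensity (fun z => ENNReal.ofReal (ξ z)))
    (hmar0 : με.map Prod.fst = ρ0) (hmar1 : με.map Prod.snd = ρ1)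
    (Aop Astar : (EuclideanSpace ℝ (Fin d) → ℝ) → EuclideanSpace ℝ (Fin d) → ℝ)
    (hA : ∀ f y, Aop f y = ∫ x, f x * ξ (x, y) ∂ρ0)
    (hAstar : ∀ g x, Astar g x = ∫ y, g y * ξ (x, y) ∂ρ1)
    (s1 : ℝ) (hs1 : s1 < 1)
    (hgapA : ∀ f : EuclideanSpace ℝ (Fin d) → ℝ, MemLp f 2 ρ0 → ∫ x, f x ∂ρ0 = 0 →
      eLpNorm (Aop f) 2 ρ1 ≤ ENNReal.ofReal s1 * eLpNorm f 2 ρ0)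
    (hgapAstar : ∀ g : EuclideanSpace ℝ (Fin d) → ℝ, MemLp g 2 ρ1 → ∫ y, g y ∂ρ1 = 0 →
      eLpNorm (Astar g) 2 ρ0 ≤ ENNReal.ofReal s1 * eLpNorm g 2 ρ1) :
    -- (i) intertwining: `A (I − A*A)⁻¹ f = (I − AA*)⁻¹ (A f)` for `f ∈ L²₀(ρ₀)`
    (∀ f u v : EuclideanSpace ℝ (Fin d) → ℝ,
      MemLp f 2 ρ0 → (∫ x, f x ∂ρ0 = 0) →
      MemLp u 2 ρ0 → (∫ x, u x ∂ρ0 = 0) →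
      ((fun x => u x - Astar (Aop u) x) =ᵐ[ρ0] f) →
      MemLp v 2 ρ1 → (∫ y, v y ∂ρ1 = 0) →
      ((fun y => v y - Aop (Astar v) y) =ᵐ[ρ1] Aop f) →
      v =ᵐ[ρ1] Aop u) ∧
    -- (ii) intertwining: `A* (I − AA*)⁻¹ g = (I − A*A)⁻¹ (A* g)` for `g ∈ L²₀(ρ₁)`
    (∀ g u v : EuclideanSpace ℝ (Fin d) → ℝ,
      MemLp g 2 ρ1 → (∫ y, g y ∂ρ1 = 0) →
      MemLp v 2 ρ1 → (∫ y, v y ∂ρ1 = 0) →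
      ((fun y => v y - Aop (Astar v) y) =ᵐ[ρ1] g) →
      MemLp u 2 ρ0 → (∫ x, u x ∂ρ0 = 0) →
      ((fun x => u x - Astar (Aop u) x) =ᵐ[ρ0] Astar g) →
      u =ᵐ[ρ0] Astar v) ∧
    -- (iii) conditional expectation identities
    (∀ f g u v : EuclideanSpace ℝ (Fin d) → ℝ,
      MemLp f 2 ρ0 → (∫ x, f x ∂ρ0 = 0) →
      MemLp g 2 ρ1 → (∫ y, g y ∂ρ1 = 0) →
      MemLp u 2 ρ0 → (∫ x, u x ∂ρ0 = 0) →
      ((fun x => u x - Astar (Aop u) x) =ᵐ[ρ0] fun x => f x - Astar g x) →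
      MemLp v 2 ρ1 → (∫ y, v y ∂ρ1 = 0) →
      ((fun y => v y - Aop (Astar v) y) =ᵐ[ρ1] fun y => g y - Aop f y) →
      (με[(fun z => u z.1 + v z.2) | MeasurableSpace.comap Prod.fst inferInstance]
          =ᵐ[με] fun z => f z.1) ∧
      (με[(fun z => u z.1 + v z.2) | MeasurableSpace.comap Prod.snd inferInstance]
          =ᵐ[με] fun z => g z.2)) := by
  obtain rfl : Aop = markovOp ρ0 (flip fun x y => ξ (x, y)) := funext₂ hA
  obtain rfl : Astar = markovOp ρ1 (fun x y => ξ (x, y)) := funext₂ hAstar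
  subst hμε
  have h : HasSpectralGap ρ0 ρ1 (fun x y => ξ (x, y)) s1 :=
    ⟨.of_map_snd hξmeas (fun _ _ => hξpos _) hmar1, .of_map_fst hξmeas (fun _ _ => hξpos _) hmar0,
      hs1, hgapA, hgapAstar⟩
  refine ⟨fun f u v _ _ hu hu0 hEu hv hv0 hEv =>
      h.ae_eq_markovOp_of_sub_markovOp_markovOp ⟨hu, hu0⟩ ⟨hv, hv0⟩ hEu hEv,
    fun g u v _ _ hv hv0 hEv hu hu0 hEu =>
      h.symm.ae_eq_markovOp_of_sub_markovOp_markovOp ⟨hv, hv0⟩ ⟨hu, hu0⟩ hEv hEu,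
    fun f g u v hf hf0 hg hg0 hu hu0 hEu hv hv0 hEv => ⟨?_, ?_⟩⟩
  · exact condExp_comap_add_ae_eq measurable_fst measurable_snd hmar0 hmar1
      (hu.integrable one_le_two) (hf.integrable one_le_two)
      (h.memL2₀_markovOp_symm ⟨hv, hv0⟩).integrable (hv.integrable one_le_two)
      (fun t ht => h.isConditionalDensity.setIntegral_densityCoupling_preimage_fst
        (hv.integrable one_le_two) ht)
      (h.add_markovOp_ae_eq_of_sub_markovOp_markovOp ⟨hf, hf0⟩ (hg.integrable one_le_two)
        ⟨hu, hu0⟩ ⟨hv, hv0⟩ hEu hEv)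
  · rw [show (fun z : EuclideanSpace ℝ (Fin d) × EuclideanSpace ℝ (Fin d) => u z.1 + v z.2)
        = fun z => v z.2 + u z.1 from funext fun _ => add_comm _ _]
    exact condExp_comap_add_ae_eq measurable_snd measurable_fst hmar1 hmar0
      (hv.integrable one_le_two) (hg.integrable one_le_two)
      (h.memL2₀_markovOp ⟨hu, hu0⟩).integrable (hu.integrable one_le_two)
      (fun t ht => h.isConditionalDensity_flip.setIntegral_densityCoupling_preimage_snd
        (hu.integrable one_le_two) ht)
      (h.symm.add_markovOp_ae_eq_of_sub_markovOp_markovOp ⟨hg, hg0⟩ (hf.integrable one_le_two)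
        ⟨hv, hv0⟩ ⟨hu, hu0⟩ hEv hEu)

/-- With `A`, `A*` the Markov operators of the Schrödinger bridge
`μ_ε(x,y) = ξ(x,y)ρ₀(x)ρ₁(y)` (with spectral gap, so that the mean-zero equations below have
unique solutions), the intertwining identities hold:
`A (I − A*A)⁻¹ = (I − AA*)⁻¹ A` on `L²₀(ρ₀)` and `A* (I − AA*)⁻¹ = (I − A*A)⁻¹ A*` on
`L²₀(ρ₁)` — expressed here via the defining equations of the inverses.  Moreover, for
`f ∈ L²₀(ρ₀)`, `g ∈ L²₀(ρ₁)` and `(X,Y) ∼ μ_ε`,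
`E[(I − A*A)⁻¹(f − A*g)(X) + (I − AA*)⁻¹(g − Af)(Y) | X] = f(X)` a.s.,
and the symmetric identity holds conditioning on `Y`. -/
theorem intertwining_and_conditional_identities (d : ℕ)
    (ρ0 ρ1 : Measure (EuclideanSpace ℝ (Fin d)))
    [IsProbabilityMeasure ρ0] [IsProbabilityMeasure ρ1]
    (ξ : EuclideanSpace ℝ (Fin d) × EuclideanSpace ℝ (Fin d) → ℝ)
    (hξmeas : Measurable ξ) (hξpos : ∀ z, 0 ≤ ξ z)
    (με : Measure (EuclideanSpace ℝ (Fin d) × EuclideanSpace ℝ (Fin d)))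
    [IsProbabilityMeasure με]
    (hμε : με = (ρ0.prod ρ1).withDensity (fun z => ENNReal.ofReal (ξ z)))
    (hmar0 : με.map Prod.fst = ρ0) (hmar1 : με.map Prod.snd = ρ1)
    (Aop Astar : (EuclideanSpace ℝ (Fin d) → ℝ) → EuclideanSpace ℝ (Fin d) → ℝ)
    (hA : ∀ f y, Aop f y = ∫ x, f x * ξ (x, y) ∂ρ0)
    (hAstar : ∀ g x, Astar g x = ∫ y, g y * ξ (x, y) ∂ρ1)
    (s1 : ℝ) (hs0 : 0 ≤ s1) (hs1 : s1 < 1)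
    (hgapA : ∀ f : EuclideanSpace ℝ (Fin d) → ℝ, MemLp f 2 ρ0 → ∫ x, f x ∂ρ0 = 0 →
      eLpNorm (Aop f) 2 ρ1 ≤ ENNReal.ofReal s1 * eLpNorm f 2 ρ0)
    (hgapAstar : ∀ g : EuclideanSpace ℝ (Fin d) → ℝ, MemLp g 2 ρ1 → ∫ y, g y ∂ρ1 = 0 →
      eLpNorm (Astar g) 2 ρ0 ≤ ENNReal.ofReal s1 * eLpNorm g 2 ρ1) :
    -- (i) intertwining: `A (I − A*A)⁻¹ f = (I − AA*)⁻¹ (A f)` for `f ∈ L²₀(ρ₀)`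
    (∀ f u v : EuclideanSpace ℝ (Fin d) → ℝ,
      MemLp f 2 ρ0 → (∫ x, f x ∂ρ0 = 0) →
      MemLp u 2 ρ0 → (∫ x, u x ∂ρ0 = 0) →
      ((fun x => u x - Astar (Aop u) x) =ᵐ[ρ0] f) →
      MemLp v 2 ρ1 → (∫ y, v y ∂ρ1 = 0) →
      ((fun y => v y - Aop (Astar v) y) =ᵐ[ρ1] Aop f) →
      v =ᵐ[ρ1] Aop u) ∧
    -- (ii) intertwining: `A* (I − AA*)⁻¹ g = (I − A*A)⁻¹ (A* g)` for `g ∈ L²₀(ρ₁)`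
    (∀ g u v : EuclideanSpace ℝ (Fin d) → ℝ,
      MemLp g 2 ρ1 → (∫ y, g y ∂ρ1 = 0) →
      MemLp v 2 ρ1 → (∫ y, v y ∂ρ1 = 0) →
      ((fun y => v y - Aop (Astar v) y) =ᵐ[ρ1] g) →
      MemLp u 2 ρ0 → (∫ x, u x ∂ρ0 = 0) →
      ((fun x => u x - Astar (Aop u) x) =ᵐ[ρ0] Astar g) →
      u =ᵐ[ρ0] Astar v) ∧
    -- (iii) conditional expectation identities
    (∀ f g u v : EuclideanSpace ℝ (Fin d) → ℝ,
      MemLp f 2 ρ0 → (∫ x, f x ∂ρ0 = 0) →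
      MemLp g 2 ρ1 → (∫ y, g y ∂ρ1 = 0) →
      MemLp u 2 ρ0 → (∫ x, u x ∂ρ0 = 0) →
      ((fun x => u x - Astar (Aop u) x) =ᵐ[ρ0] fun x => f x - Astar g x) →
      MemLp v 2 ρ1 → (∫ y, v y ∂ρ1 = 0) →
      ((fun y => v y - Aop (Astar v) y) =ᵐ[ρ1] fun y => g y - Aop f y) →
      (με[(fun z => u z.1 + v z.2) | MeasurableSpace.comap Prod.fst inferInstance]
          =ᵐ[με] fun z => f z.1) ∧
      (με[(fun z => u z.1 + v z.2) | MeasurableSpace.comap Prod.snd inferInstance]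
          =ᵐ[με] fun z => g z.2)) :=
  intertwining_and_conditional_identities_general d ρ0 ρ1 ξ hξmeas hξpos με hμε hmar0 hmar1 Aop
    Astar hA hAstar s1 hs1 hgapA hgapAstar
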